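/- Let T be a plane binary tree with n internal nodes. A linear extension of T is a bijective labeling e of the internal nodes of T by {1, …, n} such that every internal node's label is smaller than the labels of its internal-node children; let E(T) be the set of linear extensions of T. For e ∈ E(T), let w_e ∈ S_n be the word obtained by reading the labels of the internal nodes of T from left to right (in-order). Then: (i) the weight generating function of paths from the empty tree ∅ to T in the graph Tree, namely ∑ over all sequences ∅ = T_0, T_1, …, T_n = T together with indices i_1, …, i_n such that T_k = SG(T_{k-1}, i_k), of q^{i_1 + ⋯ + i_n}, equals ∑_{e ∈ E(T)} q^{inv(w_e)}; and (ii) there is exactly one sequence ∅ = T_0, T_1, …, T_n = T with T_{k-1} = (T_k)* for all k. -/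

import Mathlib

open Polynomial
open scoped Classical

/-- A plane binary tree: either the empty tree `∅` (a single leaf attached to the root,
no internal nodes), or the graft `T₁ ∨ T₂` of two plane binary trees (joined at a new
internal node attached to a new root). -/
inductive PBT : Type
  | empty : PBT
  | graft : PBT → PBT → PBT
deriving DecidableEq

namespace PBT

/-- The number of internal nodes of a plane binary tree. -/
def size : PBT → ℕ
  | empty => 0
  | graft l r => size l + size r + 1

/-- Splicing a plane binary tree `T` at its `i`-th leaf (leaves are numbered
`0, 1, …, size T` from left to right): following the path from leaf `i` to the root,
the edges weakly to the left form the first tree (with `i` internal nodes) and the edges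
weakly to the right form the second tree (with `size T - i` internal nodes). -/
def splice : PBT → ℕ → PBT × PBT
  | empty, _ => (empty, empty)
  | graft l r, i =>
      if i ≤ size l then ((splice l i).1, graft (splice l i).2 r)
      else (graft l (splice r (i - size l - 1)).1, (splice r (i - size l - 1)).2)

/-- `SG(T, i)`: splice `T` at leaf `i` into `(T₁, T₂)` and graft, giving `T₁ ∨ T₂`. -/
def SG (T : PBT) (i : ℕ) : PBT :=
  graft (splice T i).1 (splice T i).2

/-- `T*`: the tree obtained from `T` by removing the leftmost leaf and erasing its
parent internal node: `(∅ ∨ T₂)* = T₂` and `(T₁ ∨ T₂)* = T₁* ∨ T₂` for `T₁ ≠ ∅`. -/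
def star : PBT → PBT
  | empty => empty
  | graft empty r => r
  | graft (graft a b) r => graft (star (graft a b)) r

end PBT

/-- A plane binary tree whose internal nodes carry natural-number labels. -/
inductive LPBT : Type
  | empty : LPBT
  | graft : LPBT → ℕ → LPBT → LPBT
deriving DecidableEq

namespace LPBT

/-- The underlying (unlabeled) plane binary tree of a labeled tree. -/
def shape : LPBT → PBT
  | empty => PBT.empty
  | graft l _ r => PBT.graft (shape l) (shape r)

/-- The word reading the labels of the internal nodes from left to right (in-order). -/
def inorder : LPBT → List ℕ
  | empty => []
  | graft l a r => inorder l ++ a :: inorder r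

/-- The label of the root internal node, if any. -/
def rootLabel? : LPBT → Option ℕ
  | empty => none
  | graft _ a _ => some a

/-- The increasing (linear-extension) condition: every internal node's label is smaller
than the labels of its internal-node children. -/
def IsIncreasing : LPBT → Prop
  | empty => True
  | graft l a r =>
      (∀ b ∈ rootLabel? l, a < b) ∧ (∀ b ∈ rootLabel? r, a < b) ∧
        IsIncreasing l ∧ IsIncreasing r

end LPBT

/-- The set of linear extensions of a plane binary tree `T` with `n` internal nodes,
encoded as labeled trees of shape `T` whose labels are a bijective labeling by
`{1, …, n}` (the in-order word is a rearrangement of `[1, …, n]`) satisfying the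
increasing condition. -/
def linExts (T : PBT) : Set LPBT :=
  {L : LPBT | L.shape = T ∧ L.inorder.Perm (List.range' 1 T.size) ∧ L.IsIncreasing}

/-- The number of inversions of a word `w`: the number of pairs of positions `i < j`
with `w_i > w_j`. -/
def invCount (w : List ℕ) : ℕ :=
  (Finset.univ.filter fun p : Fin w.length × Fin w.length =>
    p.1 < p.2 ∧ w.get p.2 < w.get p.1).card

/-!
Label the node created by the `k`-th `SG` step of a path `∅ = T₀ → ⋯ → Tₙ = T` by `n + 1 - k`.
The new node becomes the root and carries the smallest label so far, so the result is a linear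
extension of `T`; in the in-order word the new label is inserted, as the minimum, at position
`i_k`, creating exactly `i_k` inversions. Conversely, in a linear extension the root carries the
smallest label, and deleting it (merging its two subtrees along their facing spines) undoes the
last `SG` step, whose leaf index is the size of the left subtree. So labelling is a
weight-preserving bijection from paths onto linear extensions.

For (ii), `*` lowers the size by one, so the path is forced: `T_k = *^{n-k}(T)`.
-/

namespace PBT

theorem eq_empty_of_size_eq_zero : ∀ {T : PBT}, T.size = 0 → T = empty
  | empty, _ => rfl

theorem size_splice_fst_add_snd (T : PBT) (i : ℕ) :
    (T.splice i).1.size + (T.splice i).2.size = T.size := by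
  induction T generalizing i with
  | empty => rfl
  | graft l r ihl ihr =>
    unfold splice
    split_ifs <;> simp only [size] <;> grind

theorem size_SG (T : PBT) (i : ℕ) : (T.SG i).size = T.size + 1 := by
  simp only [SG, size, size_splice_fst_add_snd]

theorem size_star : ∀ T : PBT, T.star.size = T.size - 1
  | empty => rfl
  | graft empty r => by simp [star, size]
  | graft (graft a b) r => by
    have := size_star (graft a b)
    simp only [star, size] at *
    omega

theorem size_iterate_star (T : PBT) (m : ℕ) : (star^[m] T).size = T.size - m := by
  induction m with
  | zero => rfl
  | succ m ih => rw [Function.iterate_succ_apply', size_star, ih, Nat.sub_sub]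

end PBT

theorem List.countP_eq_sum_fin {α : Type*} (p : α → Bool) (l : List α) :
    l.countP p = ∑ j : Fin l.length, if p (l.get j) then 1 else 0 := by
  induction l with
  | nil => simp
  | cons b l ih =>
    simp only [List.length_cons]
    rw [List.countP_cons, Fin.sum_univ_succ, ih, add_comm]
    simp only [List.get_cons_zero, List.get_cons_succ']
    congr

theorem invCount_cons (a : ℕ) (l : List ℕ) :
    invCount (a :: l) = l.countP (· < a) + invCount l := by
  rw [invCount, invCount, Finset.card_filter, Finset.card_filter, Fintype.sum_prod_type,
    Fintype.sum_prod_type]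
  simp only [List.length_cons]
  rw [Fin.sum_univ_succ]
  congr 1
  · rw [Fin.sum_univ_succ, List.countP_eq_sum_fin]
    simp
  · refine Finset.sum_congr rfl fun i _ => ?_
    rw [Fin.sum_univ_succ]
    simp

theorem invCount_append_cons_of_lt {w₁ w₂ : List ℕ} {v : ℕ}
    (h : ∀ c ∈ w₁ ++ w₂, v < c) :
    invCount (w₁ ++ v :: w₂) = invCount (w₁ ++ w₂) + w₁.length := by
  induction w₁ with
  | nil =>
    have : w₂.countP (· < v) = 0 :=
      List.countP_eq_zero.2 fun c hc => by simpa using (h c (by simpa using hc)).le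
    simp [invCount_cons, this]
  | cons b w₁ ih =>
    have hvb : v < b := h b (by simp)
    simp only [List.cons_append, invCount_cons, List.countP_append, List.countP_cons,
      decide_eq_true hvb, if_true, List.length_cons]
    rw [ih fun c hc => h c (List.mem_cons_of_mem _ hc)]
    omega

namespace LPBT

def size : LPBT → ℕ
  | empty => 0
  | graft l _ r => size l + size r + 1

@[simp] theorem size_shape (L : LPBT) : L.shape.size = L.size := by
  induction L with
  | empty => rfl
  | graft l a r ihl ihr => simp [shape, PBT.size, size, ihl, ihr]

@[simp] theorem length_inorder (L : LPBT) : L.inorder.length = L.size := by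
  induction L with
  | empty => rfl
  | graft l a r ihl ihr => simp [inorder, size, ihl, ihr]; omega

theorem eq_empty_of_size_eq_zero : ∀ {L : LPBT}, L.size = 0 → L = empty
  | empty, _ => rfl

theorem mem_inorder_of_mem_rootLabel :
    ∀ {L : LPBT} {b : ℕ}, b ∈ L.rootLabel? → b ∈ L.inorder
  | graft _ _ _, _, h => by simp_all [rootLabel?, inorder]

theorem IsIncreasing.lt_of_lt_rootLabel {L : LPBT} (hL : L.IsIncreasing) {a : ℕ}
    (ha : ∀ b ∈ L.rootLabel?, a < b) : ∀ c ∈ L.inorder, a < c := by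
  induction L generalizing a with
  | empty => simp [inorder]
  | graft l x r ihl ihr =>
    obtain ⟨hl, hr, hl', hr'⟩ := hL
    have hax : a < x := ha x rfl
    simp only [inorder, List.mem_append, List.mem_cons]
    rintro c (hc | rfl | hc)
    · exact hax.trans (ihl hl' hl c hc)
    · exact hax
    · exact hax.trans (ihr hr' hr c hc)

theorem isIncreasing_graft_iff {l r : LPBT} {a : ℕ} :
    (graft l a r).IsIncreasing ↔ (∀ c ∈ l.inorder, a < c) ∧ (∀ c ∈ r.inorder, a < c) ∧
      l.IsIncreasing ∧ r.IsIncreasing := by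
  refine ⟨fun ⟨hl, hr, hl', hr'⟩ => ⟨hl'.lt_of_lt_rootLabel hl, hr'.lt_of_lt_rootLabel hr,
    hl', hr'⟩, fun ⟨hl, hr, hl', hr'⟩ => ⟨?_, ?_, hl', hr'⟩⟩
  · exact fun b hb => hl b (mem_inorder_of_mem_rootLabel hb)
  · exact fun b hb => hr b (mem_inorder_of_mem_rootLabel hb)

def splice : LPBT → ℕ → LPBT × LPBT
  | empty, _ => (empty, empty)
  | graft l a r, i =>
      if i ≤ size l then ((splice l i).1, graft (splice l i).2 a r)
      else (graft l a (splice r (i - size l - 1)).1, (splice r (i - size l - 1)).2)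

theorem splice_shape (L : LPBT) (i : ℕ) :
    L.shape.splice i = ((L.splice i).1.shape, (L.splice i).2.shape) := by
  induction L generalizing i with
  | empty => rfl
  | graft l a r ihl ihr =>
    simp only [shape, PBT.splice, splice, size_shape]
    split_ifs <;> simp [shape, ihl, ihr]

@[simp] theorem splice_zero (L : LPBT) : L.splice 0 = (empty, L) := by
  induction L with
  | empty => rfl
  | graft l a r ihl ihr => simp [splice, ihl]

@[simp] theorem splice_size (L : LPBT) : L.splice L.size = (L, empty) := by
  induction L with
  | empty => rfl
  | graft l a r ihl ihr =>
    have : l.size + r.size + 1 - l.size - 1 = r.size := by omega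
    simp [splice, size, this, ihr]

theorem inorder_splice (L : LPBT) (i : ℕ) :
    (L.splice i).1.inorder ++ (L.splice i).2.inorder = L.inorder := by
  induction L generalizing i with
  | empty => rfl
  | graft l a r ihl ihr =>
    simp only [splice]
    split_ifs
    · simp [inorder, ← ihl i]
    · simp [inorder, ← ihr (i - l.size - 1)]

theorem size_splice_fst {L : LPBT} {i : ℕ} (h : i ≤ L.size) : (L.splice i).1.size = i := by
  induction L generalizing i with
  | empty => simp_all [size]
  | graft l a r ihl ihr =>
    simp only [splice]
    split_ifs with hi
    · exact ihl hi
    · simp only [size] at h ⊢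
      rw [ihr (by omega)]
      omega

theorem mem_inorder_of_mem_splice {L : LPBT} {i c : ℕ}
    (hc : c ∈ (L.splice i).1.inorder ∨ c ∈ (L.splice i).2.inorder) : c ∈ L.inorder := by
  rw [← inorder_splice L i, List.mem_append]
  exact hc

theorem IsIncreasing.splice {L : LPBT} (hL : L.IsIncreasing) (i : ℕ) :
    (L.splice i).1.IsIncreasing ∧ (L.splice i).2.IsIncreasing := by
  induction L generalizing i with
  | empty => exact ⟨trivial, trivial⟩
  | graft l a r ihl ihr =>
    obtain ⟨hl, hr, hl', hr'⟩ := isIncreasing_graft_iff.1 hL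
    simp only [LPBT.splice]
    split_ifs
    · refine ⟨(ihl hl' i).1, isIncreasing_graft_iff.2 ⟨?_, hr, (ihl hl' i).2, hr'⟩⟩
      exact fun c hc => hl c (mem_inorder_of_mem_splice (.inr hc))
    · refine ⟨isIncreasing_graft_iff.2 ⟨hl, ?_, hl', (ihr hr' _).1⟩, (ihr hr' _).2⟩
      exact fun c hc => hr c (mem_inorder_of_mem_splice (.inl hc))

/-- The inverse of `splice` on increasing trees: merges along the right spine of the first
tree and the left spine of the second. -/
def merge : LPBT → LPBT → LPBT
  | empty, r => r
  | l, empty => l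
  | graft a x b, graft c y d =>
      if x < y then graft a x (merge b (graft c y d))
      else graft (merge (graft a x b) c) y d
termination_by l r => l.size + r.size
decreasing_by all_goals simp [size]

@[simp] theorem empty_merge (R : LPBT) : merge empty R = R := by
  cases R <;> rw [merge]

@[simp] theorem merge_empty (L : LPBT) : merge L empty = L := by
  cases L <;> rw [merge]; simp

theorem graft_merge_graft (a : LPBT) (x : ℕ) (b c : LPBT) (y : ℕ) (d : LPBT) :
    merge (graft a x b) (graft c y d) =
      if x < y then graft a x (merge b (graft c y d))
      else graft (merge (graft a x b) c) y d := by
  rw [merge]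

theorem perm_inorder_merge (L R : LPBT) :
    (merge L R).inorder.Perm (L.inorder ++ R.inorder) := by
  induction L, R using merge.induct with
  | case1 r => simp [inorder]
  | case2 l h => simp [inorder]
  | case3 a x b c y d h ih =>
    rw [graft_merge_graft, if_pos h]
    simpa [inorder] using (ih.cons x).append_left a.inorder
  | case4 a x b c y d h ih =>
    rw [graft_merge_graft, if_neg h]
    simpa [inorder] using ih.append_right (y :: d.inorder)

@[simp] theorem size_merge (L R : LPBT) : (merge L R).size = L.size + R.size := by
  simpa using (perm_inorder_merge L R).length_eq

theorem merge_graft_right {X Y r : LPBT} {a : ℕ} (ha : ∀ c ∈ X.inorder, a < c) :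
    merge X (graft Y a r) = graft (merge X Y) a r := by
  cases X with
  | empty => simp
  | graft p x q =>
    have : ¬ x < a := not_lt.2 (ha x (by simp [inorder])).le
    rw [graft_merge_graft, if_neg this]

theorem merge_graft_left {l X Y : LPBT} {a : ℕ} (ha : ∀ c ∈ Y.inorder, a < c) :
    merge (graft l a X) Y = graft l a (merge X Y) := by
  cases Y with
  | empty => simp
  | graft p y q => rw [graft_merge_graft, if_pos (ha y (by simp [inorder]))]

theorem IsIncreasing.merge {L R : LPBT} (hL : L.IsIncreasing) (hR : R.IsIncreasing)
    (hd : L.inorder.Disjoint R.inorder) : (merge L R).IsIncreasing := by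
  induction L, R using merge.induct with
  | case1 r => simpa using hR
  | case2 l h => simpa using hL
  | case3 a x b c y d h ih =>
    obtain ⟨ha, hb, ha', hb'⟩ := isIncreasing_graft_iff.1 hL
    obtain ⟨hc, hd', -, -⟩ := isIncreasing_graft_iff.1 hR
    rw [graft_merge_graft, if_pos h]
    refine isIncreasing_graft_iff.2 ⟨ha, fun u hu => ?_, ha', ih hb' hR ?_⟩
    · simp only [(perm_inorder_merge _ _).mem_iff, inorder, List.mem_append, List.mem_cons] at hu
      rcases hu with hu | hu | rfl | hu
      · exact hb u hu
      · exact h.trans (hc u hu)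
      · exact h
      · exact h.trans (hd' u hu)
    · exact List.disjoint_of_subset_left (by simp [inorder]) hd
  | case4 a x b c y d h ih =>
    obtain ⟨ha, hb, -, -⟩ := isIncreasing_graft_iff.1 hL
    obtain ⟨hc, hd', hc', hd''⟩ := isIncreasing_graft_iff.1 hR
    have hyx : y < x := by
      have : x ≠ y := fun hxy => hd (a := x) (by simp [inorder]) (by simp [inorder, hxy])
      omega
    rw [graft_merge_graft, if_neg h]
    refine isIncreasing_graft_iff.2 ⟨fun u hu => ?_, hd', ih hL hc' ?_, hd''⟩
    · simp only [(perm_inorder_merge _ _).mem_iff, inorder, List.mem_append, List.mem_cons] at hu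
      rcases hu with (hu | rfl | hu) | hu
      · exact hyx.trans (ha u hu)
      · exact hyx
      · exact hyx.trans (hb u hu)
      · exact hc u hu
    · exact List.disjoint_of_subset_right (by simp [inorder]) hd

theorem splice_merge (L R : LPBT) : (merge L R).splice L.size = (L, R) := by
  induction L, R using merge.induct with
  | case1 r => simp [size]
  | case2 l h => simp
  | case3 a x b c y d h ih =>
    have : a.size + b.size + 1 - a.size - 1 = b.size := by omega
    rw [graft_merge_graft, if_pos h]
    simp [splice, size, this, ih]
  | case4 a x b c y d h ih =>
    rw [graft_merge_graft, if_neg h]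
    simp [splice, ih]

theorem IsIncreasing.merge_splice {L : LPBT} (hL : L.IsIncreasing) (i : ℕ) :
    LPBT.merge (L.splice i).1 (L.splice i).2 = L := by
  induction L generalizing i with
  | empty => simp [LPBT.splice]
  | graft l a r ihl ihr =>
    obtain ⟨hl, hr, hl', hr'⟩ := isIncreasing_graft_iff.1 hL
    simp only [LPBT.splice]
    split_ifs
    · rw [merge_graft_right fun c hc => hl c (mem_inorder_of_mem_splice (.inl hc)), ihl hl']
    · rw [merge_graft_left fun c hc => hr c (mem_inorder_of_mem_splice (.inr hc)), ihr hr']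

def SG (L : LPBT) (i v : ℕ) : LPBT :=
  graft (L.splice i).1 v (L.splice i).2

theorem shape_SG (L : LPBT) (i v : ℕ) : (L.SG i v).shape = L.shape.SG i := by
  simp [SG, shape, PBT.SG, splice_shape L i]

theorem perm_inorder_SG (L : LPBT) (i v : ℕ) : (L.SG i v).inorder.Perm (v :: L.inorder) := by
  simpa [SG, inorder, inorder_splice] using
    (List.perm_middle (a := v) (l₁ := (L.splice i).1.inorder) (l₂ := (L.splice i).2.inorder))

@[simp] theorem size_SG (L : LPBT) (i v : ℕ) : (L.SG i v).size = L.size + 1 := by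
  simpa using (perm_inorder_SG L i v).length_eq

theorem IsIncreasing.SG {L : LPBT} (hL : L.IsIncreasing) {v : ℕ} (hv : ∀ c ∈ L.inorder, v < c)
    (i : ℕ) : (L.SG i v).IsIncreasing :=
  isIncreasing_graft_iff.2 ⟨fun c hc => hv c (mem_inorder_of_mem_splice (.inl hc)),
    fun c hc => hv c (mem_inorder_of_mem_splice (.inr hc)), (hL.splice i).1, (hL.splice i).2⟩

theorem invCount_inorder_SG {L : LPBT} {i v : ℕ} (hi : i ≤ L.size)
    (hv : ∀ c ∈ L.inorder, v < c) :
    invCount (L.SG i v).inorder = invCount L.inorder + i := by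
  rw [SG, inorder, invCount_append_cons_of_lt (by rwa [inorder_splice]), inorder_splice,
    length_inorder, size_splice_fst hi]

def strip : LPBT → LPBT
  | empty => empty
  | graft l _ r => merge l r

def rootPos : LPBT → ℕ
  | empty => 0
  | graft l _ _ => l.size

theorem size_strip (L : LPBT) : L.strip.size = L.size - 1 := by
  cases L <;> simp [strip, size]

theorem rootPos_le_size_strip (L : LPBT) : L.rootPos ≤ L.strip.size := by
  cases L <;> simp [strip, rootPos]

theorem IsIncreasing.strip_SG {L : LPBT} (hL : L.IsIncreasing) (i v : ℕ) : (L.SG i v).strip = L :=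
  hL.merge_splice i

theorem rootPos_SG {L : LPBT} {i : ℕ} (hi : i ≤ L.size) (v : ℕ) : (L.SG i v).rootPos = i :=
  size_splice_fst hi

theorem graft_eq_SG_merge (l : LPBT) (v : ℕ) (r : LPBT) :
    graft l v r = (merge l r).SG l.size v := by
  rw [SG, splice_merge]

def IsIncreasingFrom (a : ℕ) (L : LPBT) : Prop :=
  L.IsIncreasing ∧ L.inorder.Perm (List.range' a L.size)

theorem IsIncreasingFrom.SG {a : ℕ} {L : LPBT} (hL : IsIncreasingFrom (a + 1) L) (i : ℕ) :
    IsIncreasingFrom a (L.SG i a) := by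
  refine ⟨hL.1.SG (fun c hc => ?_) i, (perm_inorder_SG L i a).trans ?_⟩
  · have := hL.2.mem_iff.1 hc
    rw [List.mem_range'_1] at this
    omega
  · rw [size_SG, List.range'_succ]
    exact hL.2.cons a

theorem IsIncreasingFrom.rootLabel_eq {a v : ℕ} {l r : LPBT}
    (h : IsIncreasingFrom a (graft l v r)) : v = a := by
  have hmem : ∀ c, c ∈ (graft l v r).inorder ↔ a ≤ c ∧ c < a + (graft l v r).size := by
    intro c; rw [h.2.mem_iff, List.mem_range'_1]
  have hv := (hmem v).1 (by simp [inorder])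
  have ha := (hmem a).2 ⟨le_rfl, by simp [size]⟩
  simp only [inorder, List.mem_append, List.mem_cons] at ha
  obtain ⟨hl, hr, -, -⟩ := isIncreasing_graft_iff.1 h.1
  rcases ha with ha | rfl | ha
  · exact absurd (hl a ha) (by omega)
  · rfl
  · exact absurd (hr a ha) (by omega)

theorem IsIncreasingFrom.strip {a : ℕ} {L : LPBT} (hL : IsIncreasingFrom a L) :
    IsIncreasingFrom (a + 1) L.strip := by
  cases L with
  | empty => exact ⟨trivial, by simp [LPBT.strip, inorder, size]⟩
  | graft l v r =>
    obtain rfl := hL.rootLabel_eq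
    have hperm : (l.inorder ++ r.inorder).Perm (List.range' (v + 1) (l.size + r.size)) := by
      have := List.perm_middle.symm.trans hL.2
      rw [size, List.range'_succ] at this
      exact this.cons_inv
    obtain ⟨-, -, hl, hr⟩ := isIncreasing_graft_iff.1 hL.1
    refine ⟨hl.merge hr ?_, ?_⟩
    · exact List.disjoint_of_nodup_append (hperm.nodup_iff.2 List.nodup_range')
    · simpa [LPBT.strip] using (perm_inorder_merge l r).trans hperm

theorem IsIncreasingFrom.eq_SG {a : ℕ} {L : LPBT} (hL : IsIncreasingFrom a L)
    (hne : L ≠ empty) : L = L.strip.SG L.rootPos a := by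
  cases L with
  | empty => exact absurd rfl hne
  | graft l v r =>
    obtain rfl := hL.rootLabel_eq
    exact graft_eq_SG_merge l v r

theorem IsIncreasingFrom.iterate_strip {a : ℕ} {L : LPBT} (hL : IsIncreasingFrom a L) (m : ℕ) :
    IsIncreasingFrom (a + m) (LPBT.strip^[m] L) := by
  induction m with
  | zero => exact hL
  | succ m ih => rw [Function.iterate_succ_apply', ← add_assoc]; exact ih.strip

theorem size_iterate_strip (L : LPBT) (m : ℕ) : (strip^[m] L).size = L.size - m := by
  induction m with
  | zero => rfl
  | succ m ih => rw [Function.iterate_succ_apply', size_strip, ih, Nat.sub_sub]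

/-- The node created at step `k` is labelled `n - k`: each new node becomes the root, so
labels must decrease along the construction. -/
def build (idx : ℕ → ℕ) (n : ℕ) : ℕ → LPBT
  | 0 => empty
  | k + 1 => (build idx n k).SG (idx k) (n - k)

@[simp] theorem size_build (idx : ℕ → ℕ) (n k : ℕ) : (build idx n k).size = k := by
  induction k with
  | zero => rfl
  | succ k ih => simp [build, ih]

variable {idx : ℕ → ℕ} {n k : ℕ}

theorem build_congr {idx' : ℕ → ℕ} (h : ∀ j < k, idx j = idx' j) :
    build idx n k = build idx' n k := by
  induction k with
  | zero => rfl
  | succ k ih => rw [build, build, ih fun j hj => h j (by omega), h k (by omega)]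

theorem isIncreasingFrom_build (hk : k ≤ n) : IsIncreasingFrom (n - k + 1) (build idx n k) := by
  induction k with
  | zero => exact ⟨trivial, by simp [build, inorder, size]⟩
  | succ k ih =>
    have := (ih (by omega)).SG (idx k)
    rwa [show n - (k + 1) + 1 = n - k by omega]

theorem invCount_build (hidx : ∀ j < k, idx j ≤ j) (hk : k ≤ n) :
    invCount (build idx n k).inorder = ∑ j ∈ Finset.range k, idx j := by
  induction k with
  | zero => simp [build, inorder, invCount, Finset.eq_empty_of_isEmpty]
  | succ k ih =>
    have hlabels : ∀ c ∈ (build idx n k).inorder, n - k < c := fun c hc => by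
      have := (isIncreasingFrom_build (idx := idx) (k := k) (by omega)).2.mem_iff.1 hc
      rw [List.mem_range'_1] at this
      omega
    rw [build, invCount_inorder_SG (by simpa using hidx k (by omega)) hlabels,
      ih (fun j hj => hidx j (by omega)) (by omega), Finset.sum_range_succ]

theorem iterate_strip_build {d : ℕ} (hd : d ≤ n) :
    strip^[d] (build idx n n) = build idx n (n - d) := by
  induction d with
  | zero => rfl
  | succ d ih =>
    obtain ⟨k, hk⟩ : ∃ k, n - d = k + 1 := ⟨n - d - 1, by omega⟩
    rw [Function.iterate_succ_apply', ih (by omega), hk, build,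
      (isIncreasingFrom_build (by omega)).1.strip_SG]
    congr 1
    omega

/-- The inverse of `build`: the leaf index of step `j` is the root position after stripping
the roots of the later steps. -/
def peelIdx (n : ℕ) (L : LPBT) (j : ℕ) : ℕ :=
  (strip^[n - (j + 1)] L).rootPos

theorem peelIdx_build (hidx : ∀ j < n, idx j ≤ j) {j : ℕ} (hj : j < n) :
    peelIdx n (build idx n n) j = idx j := by
  rw [peelIdx, iterate_strip_build (by omega), show n - (n - (j + 1)) = j + 1 by omega,
    build, rootPos_SG (by simpa using hidx j hj)]

theorem peelIdx_le {L : LPBT} (hL : L.size = n) {j : ℕ} (hj : j < n) : peelIdx n L j ≤ j := by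
  have := rootPos_le_size_strip (strip^[n - (j + 1)] L)
  rw [← Function.iterate_succ_apply' strip, size_iterate_strip, hL] at this
  rw [peelIdx]
  omega

theorem build_peelIdx {L : LPBT} (hL : IsIncreasingFrom 1 L) (hn : L.size = n) (hk : k ≤ n) :
    build (peelIdx n L) n k = strip^[n - k] L := by
  induction k with
  | zero =>
    refine (eq_empty_of_size_eq_zero ?_).symm
    rw [size_iterate_strip, hn, Nat.sub_zero, Nat.sub_self]
  | succ k ih =>
    have hne : strip^[n - (k + 1)] L ≠ empty := fun h => by
      have := congrArg size h
      rw [size_iterate_strip] at this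
      simp [size] at this
      omega
    have hstrip := (hL.iterate_strip (n - (k + 1))).eq_SG hne
    rw [← Function.iterate_succ_apply' strip, show (n - (k + 1)).succ = n - k by omega,
      show 1 + (n - (k + 1)) = n - k by omega] at hstrip
    rw [build, ih (by omega), hstrip, peelIdx]

end LPBT

/-- Paths `∅ = T₀ → ⋯ → Tₙ = T` in the graph `Tree`, with their leaf indices. -/
abbrev SGPath (n : ℕ) (T : PBT) : Type :=
  {p : (Fin (n + 1) → PBT) × (Fin n → ℕ) //
    p.1 0 = PBT.empty ∧ p.1 (Fin.last n) = T ∧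
    ∀ k : Fin n, p.2 k ≤ (p.1 k.castSucc).size ∧ p.1 k.succ = (p.1 k.castSucc).SG (p.2 k)}

namespace SGPath

open LPBT

variable {n : ℕ} {T : PBT}

def idx (p : SGPath n T) (j : ℕ) : ℕ :=
  if h : j < n then p.1.2 ⟨j, h⟩ else 0

theorem idx_of_lt (p : SGPath n T) {j : ℕ} (hj : j < n) : p.idx j = p.1.2 ⟨j, hj⟩ :=
  dif_pos hj

theorem size_tree (p : SGPath n T) (k : Fin (n + 1)) : (p.1.1 k).size = k := by
  induction k using Fin.induction with
  | zero => rw [p.2.1]; rfl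
  | succ k ih => rw [(p.2.2.2 k).2, PBT.size_SG, ih, Fin.val_succ, Fin.val_castSucc]

theorem idx_le (p : SGPath n T) {j : ℕ} (hj : j < n) : p.idx j ≤ j := by
  simpa [idx_of_lt p hj, size_tree] using (p.2.2.2 ⟨j, hj⟩).1

theorem tree_eq_shape_build (p : SGPath n T) (k : Fin (n + 1)) :
    p.1.1 k = (build p.idx n k).shape := by
  induction k using Fin.induction with
  | zero => exact p.2.1
  | succ k ih =>
    rw [(p.2.2.2 k).2, ih, Fin.val_succ, build, shape_SG, Fin.val_castSucc, idx_of_lt p k.2]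

def labeling (p : SGPath n T) : LPBT :=
  build p.idx n n

theorem labeling_mem_linExts (p : SGPath n T) : p.labeling ∈ linExts T := by
  have hlast := tree_eq_shape_build p (Fin.last n)
  rw [p.2.2.1, Fin.val_last] at hlast
  have hsize : T.size = n := by rw [hlast, size_shape, size_build]
  obtain ⟨hinc, hperm⟩ := isIncreasingFrom_build (idx := p.idx) (le_refl n)
  refine ⟨hlast.symm, ?_, hinc⟩
  rw [hsize]
  simpa [labeling] using hperm

theorem invCount_labeling (p : SGPath n T) :
    invCount p.labeling.inorder = ∑ k : Fin n, p.1.2 k := by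
  rw [labeling, invCount_build (fun j hj => p.idx_le hj) le_rfl, ← Fin.sum_univ_eq_sum_range]
  exact Finset.sum_congr rfl fun k _ => idx_of_lt p k.2

theorem labeling_injective : Function.Injective (labeling : SGPath n T → LPBT) := by
  intro p q hpq
  have hidx : p.1.2 = q.1.2 := funext fun k => by
    rw [← idx_of_lt p k.2, ← idx_of_lt q k.2, ← peelIdx_build (fun j hj => p.idx_le hj) k.2,
      ← peelIdx_build (fun j hj => q.idx_le hj) k.2]
    exact congrArg (peelIdx n · k) hpq
  have htrees : p.1.1 = q.1.1 := funext fun k => by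
    rw [tree_eq_shape_build, tree_eq_shape_build]
    unfold idx
    rw [hidx]
  exact Subtype.ext (Prod.ext htrees hidx)

theorem exists_labeling_eq (hT : T.size = n) {L : LPBT} (hL : L ∈ linExts T) :
    ∃ p : SGPath n T, p.labeling = L := by
  obtain ⟨hshape, hperm, hinc⟩ := hL
  have hsize : L.size = n := by rw [← size_shape, hshape, hT]
  have hfrom : IsIncreasingFrom 1 L := ⟨hinc, by rwa [← size_shape, hshape]⟩
  have hbuild : ∀ k ≤ n, build (peelIdx n L) n k = strip^[n - k] L :=
    fun k hk => build_peelIdx hfrom hsize hk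
  let p : SGPath n T :=
    ⟨(fun k => (build (peelIdx n L) n k).shape, fun k => peelIdx n L k),
      rfl, by simp [hbuild n le_rfl, hshape],
      fun k => ⟨by simpa using peelIdx_le hsize k.2, by simp [build, shape_SG]⟩⟩
  refine ⟨p, ?_⟩
  rw [labeling, build_congr (idx' := peelIdx n L) fun j hj => idx_of_lt p hj,
    hbuild n le_rfl, Nat.sub_self, Function.iterate_zero_apply]

end SGPath

theorem finsum_SGPath_eq {M : Type*} [AddCommMonoid M] (f : ℕ → M) {n : ℕ} {T : PBT}
    (hT : T.size = n) :
    ∑ᶠ p : SGPath n T, f (∑ k : Fin n, p.1.2 k) =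
      ∑ᶠ L ∈ linExts T, f (invCount L.inorder) := by
  have hrange : linExts T = Set.range SGPath.labeling := Set.ext fun L =>
    ⟨fun hL => SGPath.exists_labeling_eq hT hL, fun ⟨p, hp⟩ => hp ▸ p.labeling_mem_linExts⟩
  rw [hrange, finsum_mem_range SGPath.labeling_injective]
  simp_rw [SGPath.invCount_labeling]

theorem eq_iterate_of_forall_castSucc_eq {α : Type*} {f : α → α} {n : ℕ}
    {p : Fin (n + 1) → α} (h : ∀ k : Fin n, p k.castSucc = f (p k.succ)) (k : Fin (n + 1)) :
    p k = f^[n - k] (p (Fin.last n)) := by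
  induction k using Fin.reverseInduction with
  | last => simp
  | cast k ih =>
    rw [h, ih, Fin.val_castSucc, Fin.val_succ, ← Function.iterate_succ_apply' f]
    congr 1
    omega

theorem existsUnique_star_path {n : ℕ} {T : PBT} (hT : T.size = n) :
    ∃! p : Fin (n + 1) → PBT,
      p 0 = PBT.empty ∧ p (Fin.last n) = T ∧ ∀ k : Fin n, p k.castSucc = (p k.succ).star := by
  refine ⟨fun k => PBT.star^[n - k] T, ⟨?_, by simp, fun k => ?_⟩, ?_⟩
  · exact PBT.eq_empty_of_size_eq_zero (by simp [PBT.size_iterate_star, hT])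
  · dsimp only
    rw [← Function.iterate_succ_apply' PBT.star, Fin.val_castSucc, Fin.val_succ]
    congr 1
    omega
  · rintro q ⟨-, hq, hstep⟩
    funext k
    rw [eq_iterate_of_forall_castSucc_eq hstep, hq]

/-- Let `T` be a plane binary tree with `n` internal nodes.  Then:
(i) the weight generating function of paths from `∅` to `T` in `Tree` — the sum over all
sequences `∅ = T₀, T₁, …, T_n = T` together with leaf indices `i₁, …, i_n` with
`T_k = SG(T_{k-1}, i_k)`, of `q^{i₁ + ⋯ + i_n}` — equals `∑_{e ∈ E(T)} q^{inv(w_e)}`;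
and (ii) there is exactly one sequence `∅ = T₀, T₁, …, T_n = T` with
`T_{k-1} = (T_k)*` for all `k`. -/
theorem stmt_12 (n : ℕ) (T : PBT) (hT : T.size = n) :
    (∑ᶠ p : {p : (Fin (n + 1) → PBT) × (Fin n → ℕ) //
        p.1 0 = PBT.empty ∧ p.1 (Fin.last n) = T ∧
        ∀ k : Fin n, p.2 k ≤ (p.1 k.castSucc).size ∧
          p.1 k.succ = (p.1 k.castSucc).SG (p.2 k)},
      (X : Polynomial ℕ) ^ (∑ k : Fin n, p.1.2 k))
      = (∑ᶠ L ∈ linExts T, (X : Polynomial ℕ) ^ invCount L.inorder) ∧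
    (∃! p : Fin (n + 1) → PBT,
      p 0 = PBT.empty ∧ p (Fin.last n) = T ∧
        ∀ k : Fin n, p k.castSucc = (p k.succ).star) :=
  ⟨finsum_SGPath_eq _ hT, existsUnique_star_path hT⟩
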